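/- Let φ_α(z₁, z₂) = z₁² + α z₁z₂ + z₂² with α ≥ 0 and let P denote orthogonal projection of L²(T²) onto H²(T²). Then P(sgn φ_α) is a scalar multiple of φ_α if and only if α · ((1/(2π))∫₀^{2π} e^{iθ} sgn(α + 2cos θ) dθ) = (1/(2π))∫₀^{2π} sgn(α + 2cos θ) dθ. -/

import Mathlib

/-!
On the torus write `z₁ = e^{iθ₁}`, `z₂ = e^{iθ₂}`. Then
`φ_α = z₁z₂ (α + z₁/z₂ + z₂/z₁) = e^{i(θ₁+θ₂)} (α + 2 cos(θ₁ - θ₂))`, and since the second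
factor is real, `sgn φ_α = e^{i(θ₁+θ₂)} sgn(α + 2 cos(θ₁ - θ₂))`. Integrating first in `θ₂`
and then in `θ₁` shows that the Fourier coefficient of `sgn φ_α` at `(k₁, k₂)` vanishes unless
`k₁ + k₂ = 2`, where it is the Fourier coefficient at frequency `±(k₂ - 1)` of the even
function `sgn(α + 2 cos ϑ)`. So on the nonnegative quadrant `sgn φ_α` only has the coefficients
`a` at `(2,0)` and `(0,2)` and `b` at `(1,1)`, and `a z₁² + b z₁z₂ + a z₂²` is a multiple
of `φ_α` iff `b = α a`.
-/

/-- Complex signum: `sgn w = w/|w|` for `w ≠ 0` and `sgn 0 = 0`. -/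
noncomputable def csgn (w : ℂ) : ℂ := if w = 0 then 0 else w / ((‖w‖ : ℝ) : ℂ)

/-- The function `sgn φ_α` on the 2-torus, in angular coordinates. -/
noncomputable def sgnPhi (α θ₁ θ₂ : ℝ) : ℂ :=
  csgn (Complex.exp (2 * θ₁ * Complex.I) + (α : ℂ) * Complex.exp ((θ₁ + θ₂) * Complex.I)
    + Complex.exp (2 * θ₂ * Complex.I))

/-- Fourier coefficient of `sgn φ_α` at frequency `(k₁, k₂)`. -/
noncomputable def sgnPhiCoeff (α : ℝ) (k₁ k₂ : ℤ) : ℂ :=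
  ((1 / (2 * Real.pi) ^ 2 : ℝ) : ℂ) *
    ∫ θ₁ in (0:ℝ)..(2 * Real.pi), ∫ θ₂ in (0:ℝ)..(2 * Real.pi),
      sgnPhi α θ₁ θ₂ * Complex.exp (-(((k₁ : ℝ) * θ₁ + (k₂ : ℝ) * θ₂) : ℝ) * Complex.I)

/-- Fourier coefficient of `φ_α(z) = z₁² + α z₁z₂ + z₂²` at `(k₁, k₂)`. -/
noncomputable def phiCoeff (α : ℝ) (k₁ k₂ : ℤ) : ℂ :=
  if (k₁ = 2 ∧ k₂ = 0) ∨ (k₁ = 0 ∧ k₂ = 2) then 1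
  else if k₁ = 1 ∧ k₂ = 1 then (α : ℂ) else 0

open Complex intervalIntegral
open scoped Real

lemma csgn_exp_mul_ofReal (t r : ℝ) :
    csgn (exp (t * I) * r) = exp (t * I) * (Real.sign r : ℂ) := by
  rcases eq_or_ne r 0 with rfl | hr
  · simp [csgn]
  have hne : exp (t * I) * r ≠ 0 := mul_ne_zero (exp_ne_zero _) (ofReal_ne_zero.mpr hr)
  have hsign : Real.sign r = r / |r| := by
    rcases hr.lt_or_gt with h | h
    · rw [Real.sign_of_neg h, abs_of_neg h, div_neg, div_self h.ne]
    · rw [Real.sign_of_pos h, abs_of_pos h, div_self h.ne']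
  rw [csgn, if_neg hne, norm_mul, norm_exp_ofReal_mul_I, norm_real, Real.norm_eq_abs, one_mul,
    hsign, ofReal_div, mul_div_assoc]

lemma sgnPhi_eq (α θ₁ θ₂ : ℝ) :
    sgnPhi α θ₁ θ₂ = exp (↑(θ₁ + θ₂) * I) * (Real.sign (α + 2 * Real.cos (θ₁ - θ₂)) : ℂ) := by
  have hphi : exp (2 * θ₁ * I) + α * exp ((θ₁ + θ₂) * I) + exp (2 * θ₂ * I)
      = exp (↑(θ₁ + θ₂) * I) * ↑(α + 2 * Real.cos (θ₁ - θ₂)) := by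
    simp only [ofReal_add, ofReal_mul, ofReal_ofNat, ofReal_cos, ofReal_sub, two_cos, mul_add,
      ← exp_add]
    ring_nf
  rw [sgnPhi, hphi, csgn_exp_mul_ofReal]

lemma exp_int_mul_mul_I_periodic (n : ℤ) :
    Function.Periodic (fun x : ℝ => exp (n * x * I)) (2 * π) := fun x => by
  simp only [ofReal_add, ofReal_mul, ofReal_ofNat, mul_add, add_mul, exp_add]
  rw [show (n : ℂ) * (2 * π) * I = n * (2 * π * I) by ring, exp_int_mul_two_pi_mul_I, mul_one]

lemma integral_exp_int_mul_mul_I (n : ℤ) :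
    ∫ x in (0 : ℝ)..2 * π, exp (n * x * I) = if n = 0 then (2 * π : ℂ) else 0 := by
  split_ifs with hn
  · simp [hn]
  have hc : (n : ℂ) * I ≠ 0 := mul_ne_zero (Int.cast_ne_zero.mpr hn) I_ne_zero
  simp_rw [mul_right_comm _ _ I]
  rw [integral_exp_mul_complex hc, mul_right_comm, (exp_int_mul_mul_I_periodic n).eq]
  simp

lemma integral_exp_int_mul_comp_sub {f : ℝ → ℂ} (hf : Function.Periodic f (2 * π)) (n : ℤ)
    (t : ℝ) :
    ∫ s in (0 : ℝ)..2 * π, exp (n * s * I) * f (t - s)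
      = exp (n * t * I) * ∫ u in (0 : ℝ)..2 * π, exp (↑(-n) * u * I) * f u := by
  set g : ℝ → ℂ := fun u => exp (n * t * I) * (exp (↑(-n) * u * I) * f u)
  have hg : Function.Periodic g (2 * π) :=
    ((exp_int_mul_mul_I_periodic (-n)).mul hf).comp (exp (n * t * I) * ·)
  calc ∫ s in (0 : ℝ)..2 * π, exp (n * s * I) * f (t - s)
      = ∫ s in (0 : ℝ)..2 * π, g (t - s) := by
        refine integral_congr fun s _ => ?_
        simp only [g, ← mul_assoc, ← exp_add]
        push_cast
        ring_nf
    _ = ∫ u in t - 2 * π..t, g u := by rw [integral_comp_sub_left, sub_zero]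
    _ = ∫ u in (0 : ℝ)..2 * π, g u := by
        simpa using hg.intervalIntegral_add_eq (t - 2 * π) 0
    _ = _ := integral_const_mul _ _

lemma integral_exp_neg_int_mul_of_symm {f : ℝ → ℂ} (hf : ∀ x, f (2 * π - x) = f x) (n : ℤ) :
    ∫ x in (0 : ℝ)..2 * π, exp (↑(-n) * x * I) * f x
      = ∫ x in (0 : ℝ)..2 * π, exp (n * x * I) * f x := by
  have hsub := integral_comp_sub_left (fun x => exp (n * x * I) * f x) (a := 0) (b := 2 * π)
    (2 * π)
  rw [sub_self, sub_zero] at hsub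
  rw [← hsub]
  refine integral_congr fun x _ => ?_
  have hexp := exp_int_mul_mul_I_periodic n (-x)
  simp only at hexp
  rw [hf, sub_eq_neg_add, hexp]
  push_cast
  ring_nf

lemma sgnPhiCoeff_eq (α : ℝ) (k₁ k₂ : ℤ) :
    sgnPhiCoeff α k₁ k₂ = if k₁ + k₂ = 2 then (1 / (2 * π) : ℂ) *
      ∫ θ in (0 : ℝ)..2 * π, exp (↑(k₂ - 1) * θ * I) * (Real.sign (α + 2 * Real.cos θ) : ℂ)
      else 0 := by
  set S := ∫ θ in (0 : ℝ)..2 * π, exp (↑(k₂ - 1) * θ * I) * (Real.sign (α + 2 * Real.cos θ) : ℂ)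
  have hper : Function.Periodic (fun θ => (Real.sign (α + 2 * Real.cos θ) : ℂ)) (2 * π) :=
    fun θ => by simp only [Real.cos_add_two_pi]
  have hinner : ∀ θ₁ : ℝ, ∫ θ₂ in (0 : ℝ)..2 * π,
      sgnPhi α θ₁ θ₂ * exp (-↑((k₁ : ℝ) * θ₁ + (k₂ : ℝ) * θ₂) * I)
        = exp (↑(2 - k₁ - k₂) * θ₁ * I) * S := by
    intro θ₁
    calc _ = ∫ θ₂ in (0 : ℝ)..2 * π, exp (↑(1 - k₁) * θ₁ * I) *
          (exp (↑(1 - k₂) * θ₂ * I) * (Real.sign (α + 2 * Real.cos (θ₁ - θ₂)) : ℂ)) := by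
          refine integral_congr fun θ₂ _ => ?_
          simp only [sgnPhi_eq, mul_right_comm _ (Real.sign _ : ℂ), ← mul_assoc, ← exp_add]
          push_cast
          ring_nf
      _ = _ := by
          rw [integral_const_mul, integral_exp_int_mul_comp_sub hper, ← mul_assoc, ← exp_add,
            neg_sub]
          congr 2
          push_cast
          ring
  rw [sgnPhiCoeff, integral_congr fun θ₁ _ => hinner θ₁, integral_mul_const,
    integral_exp_int_mul_mul_I]
  by_cases hk : k₁ + k₂ = 2
  · rw [if_pos (by omega), if_pos hk]
    push_cast
    field_simp
  · rw [if_neg (by omega), if_neg hk, zero_mul, mul_zero]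

lemma phiCoeff_eq_zero_of_add_ne_two {α : ℝ} {k₁ k₂ : ℤ} (hk : k₁ + k₂ ≠ 2) :
    phiCoeff α k₁ k₂ = 0 := by
  rw [phiCoeff, if_neg (by omega), if_neg (by omega)]

theorem projection_scalar_multiple_iff_general (α : ℝ) :
    (∃ c : ℂ, ∀ k₁ k₂ : ℤ, 0 ≤ k₁ → 0 ≤ k₂ → sgnPhiCoeff α k₁ k₂ = c * phiCoeff α k₁ k₂)
      ↔ (α : ℂ) * ((1 / (2 * Real.pi) : ℂ) * ∫ θ in (0:ℝ)..(2 * Real.pi),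
            Complex.exp (θ * Complex.I) * ((Real.sign (α + 2 * Real.cos θ) : ℝ) : ℂ))
        = (1 / (2 * Real.pi) : ℂ) * ∫ θ in (0:ℝ)..(2 * Real.pi),
            ((Real.sign (α + 2 * Real.cos θ) : ℝ) : ℂ) := by
  have c02 : sgnPhiCoeff α 0 2 = (1 / (2 * π) : ℂ) * ∫ θ in (0:ℝ)..2 * π,
      exp (θ * I) * (Real.sign (α + 2 * Real.cos θ) : ℂ) := by
    simp [sgnPhiCoeff_eq]
  have c20 : sgnPhiCoeff α 2 0 = sgnPhiCoeff α 0 2 := by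
    rw [sgnPhiCoeff_eq, sgnPhiCoeff_eq, if_pos (by norm_num), if_pos (by norm_num)]
    congr 1
    exact integral_exp_neg_int_mul_of_symm (fun θ => by simp [Real.cos_two_pi_sub]) 1
  have c11 : sgnPhiCoeff α 1 1 = (1 / (2 * π) : ℂ) * ∫ θ in (0:ℝ)..2 * π,
      (Real.sign (α + 2 * Real.cos θ) : ℂ) := by
    simp [sgnPhiCoeff_eq]
  constructor
  · rintro ⟨c, hc⟩
    have h02 := hc 0 2 le_rfl zero_le_two
    have h11 := hc 1 1 zero_le_one zero_le_one
    norm_num [phiCoeff] at h02 h11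
    rw [← c02, ← c11, h02, h11, mul_comm]
  · intro h
    refine ⟨sgnPhiCoeff α 0 2, fun k₁ k₂ hk₁ hk₂ => ?_⟩
    by_cases hk : k₁ + k₂ = 2
    · obtain ⟨rfl, rfl⟩ | ⟨rfl, rfl⟩ | ⟨rfl, rfl⟩ :
          (k₁ = 2 ∧ k₂ = 0) ∨ (k₁ = 1 ∧ k₂ = 1) ∨ (k₁ = 0 ∧ k₂ = 2) := by omega
      · simp [phiCoeff, c20]
      · rw [c11, ← h, c02]
        simp [phiCoeff, mul_comm]
      · simp [phiCoeff]
    · rw [sgnPhiCoeff_eq, if_neg hk, phiCoeff_eq_zero_of_add_ne_two hk, mul_zero]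

/-- `P(sgn φ_α)` (i.e. the nonnegative-frequency part of `sgn φ_α`) is a
scalar multiple of `φ_α` iff `α·ĉ(0,2) = ĉ(1,1)`, expressed by one-variable integrals. -/
theorem projection_scalar_multiple_iff (α : ℝ) (hα : 0 ≤ α) :
    (∃ c : ℂ, ∀ k₁ k₂ : ℤ, 0 ≤ k₁ → 0 ≤ k₂ → sgnPhiCoeff α k₁ k₂ = c * phiCoeff α k₁ k₂)
      ↔ (α : ℂ) * ((1 / (2 * Real.pi) : ℂ) * ∫ θ in (0:ℝ)..(2 * Real.pi),
            Complex.exp (θ * Complex.I) * ((Real.sign (α + 2 * Real.cos θ) : ℝ) : ℂ))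
        = (1 / (2 * Real.pi) : ℂ) * ∫ θ in (0:ℝ)..(2 * Real.pi),
            ((Real.sign (α + 2 * Real.cos θ) : ℝ) : ℂ) :=
  projection_scalar_multiple_iff_general α
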